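/- arXiv:2410.17200 — 3 statements merged into one kernel-verified Lean document; each statement's English description precedes it below -/
import Mathlib

section
/- Uniqueness of the measure-valued PDE solution: assume F ∈ C^1 with F(a) > 0 for all a > 0 and F^c = 1-F > 0 everywhere, hazard h = F'/F^c bounded, and let Ῡ : ℝ_+ → ℝ be continuous. If μ, ν ∈ C(ℝ_+; M_F(ℝ_+)) are two families of finite nonnegative measures with μ_0 = ν_0 and both satisfy, for every φ ∈ C_c^1(ℝ_+), d/dt μ_t(φ) = φ(0) Ῡ(t) + μ_t(φ' - h φ), then μ_t = ν_t for all t ≥ 0. -/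
/-!
Fix `T ≥ 0` and `g ∈ C¹_c`, and put `G = (1 - F) g`. The backward solution
`v_s(x) = G (x + T - s) / (1 - F x)` has `v_T = g`, and since `(1 - F)⁻¹` has logarithmic
derivative `h`, it satisfies `∂ₓ v_s - h v_s = -∂ₛ v_s`. For any weak solution `μ` the PDE
contribution to `d/ds μ_s(v_s)` therefore cancels the contribution of the moving test function,
leaving `d/ds μ_s(v_s) = v_s(0) Υ(s)`, which does not depend on the solution (the moving test
function is differentiable in `s` uniformly in `x`, and weak continuity keeps the mass of `μ_s`
bounded near each time, so that contribution is computed by differentiating under `μ_s`). Hence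
`μ_s(v_s) - ν_s(v_s)` is constant in `s`, zero at `s = 0`, so `μ_T(g) = ν_T(g)`; and finite
measures on `ℝ` are determined by their integrals against `C¹_c` functions.
-/

open Real Set MeasureTheory Filter Topology Asymptotics

theorem exists_forall_abs_sub_sub_mul_deriv_le {G : ℝ → ℝ} (hG : Differentiable ℝ G)
    (hG' : UniformContinuous (deriv G)) {η : ℝ} (hη : 0 < η) :
    ∃ δ > 0, ∀ ε, |ε| ≤ δ → ∀ y, |G (y + ε) - G y - ε * deriv G y| ≤ η * |ε| := by
  obtain ⟨δ, hδ, hclose⟩ := Metric.uniformContinuous_iff.1 hG' η hη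
  refine ⟨δ / 2, half_pos hδ, fun ε hε y => ?_⟩
  have hderiv (z : ℝ) : HasDerivAt (fun z => G z - z * deriv G y) (deriv G z - deriv G y) z := by
    simpa using (hG z).hasDerivAt.fun_sub ((hasDerivAt_id z).mul_const (deriv G y))
  have hbound : ∀ z ∈ Metric.closedBall y (δ / 2), ‖deriv G z - deriv G y‖ ≤ η := fun z hz =>
    (hclose ((Metric.mem_closedBall.1 hz).trans_lt (half_lt_self hδ))).le
  have hmvt := (convex_closedBall y (δ / 2)).norm_image_sub_le_of_norm_deriv_le
    (fun z _ => (hderiv z).differentiableAt) (fun z hz => (hderiv z).deriv ▸ hbound z hz)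
    (Metric.mem_closedBall_self (half_pos hδ).le) (y := y + ε) (by simpa using hε)
  simp only [Real.norm_eq_abs, add_sub_cancel_left] at hmvt
  convert hmvt using 2
  ring

theorem HasCompactSupport.exists_forall_abs_mul_sub_sub_mul_deriv_le {G ρ : ℝ → ℝ}
    (hG : ContDiff ℝ 1 G) (hGc : HasCompactSupport G) (hρ : Continuous ρ) {η : ℝ} (hη : 0 < η) :
    ∃ δ > 0, ∀ ε, |ε| ≤ δ → ∀ y, |ρ y * (G (y + ε) - G y - ε * deriv G y)| ≤ η * |ε| := by
  obtain ⟨B, hB⟩ := (hGc.isCompact.cthickening (r := 1)).exists_bound_of_continuousOn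
    hρ.continuousOn
  have hG' : UniformContinuous (deriv G) :=
    (hG.continuous_deriv le_rfl).uniformContinuous_of_tendsto_cocompact
      hGc.deriv.is_zero_at_infty
  obtain ⟨δ, hδ, htaylor⟩ := exists_forall_abs_sub_sub_mul_deriv_le
    (hG.differentiable one_ne_zero) hG' (η := η / (|B| + 1)) (by positivity)
  refine ⟨min δ 1, by positivity, fun ε hε y => ?_⟩
  by_cases hy : y ∈ Metric.cthickening 1 (tsupport G)
  · calc |ρ y * (G (y + ε) - G y - ε * deriv G y)|
        ≤ |B| * (η / (|B| + 1) * |ε|) := by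
          rw [abs_mul]
          exact mul_le_mul ((hB y hy).trans (le_abs_self B))
            (htaylor ε (hε.trans (min_le_left _ _)) y) (abs_nonneg _) (abs_nonneg _)
      _ ≤ η * |ε| := by
          rw [← mul_assoc, mul_div_left_comm]
          gcongr
          exact (mul_le_iff_le_one_right hη).2 ((div_le_one (by positivity)).2 (by linarith))
  · have hnot : ∀ z, dist z y ≤ 1 → z ∉ tsupport G := fun z hz hzG =>
      hy (Metric.mem_cthickening_of_dist_le y z 1 _ hzG (dist_comm z y ▸ hz))
    have hGε : G (y + ε) = 0 := image_eq_zero_of_notMem_tsupport (hnot _ (by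
      simpa using hε.trans (min_le_right _ _)))
    have hG0 : G y = 0 := image_eq_zero_of_notMem_tsupport (hnot y (by simp))
    have hG'0 : deriv G y = 0 :=
      image_eq_zero_of_notMem_tsupport fun h => hnot y (by simp) (tsupport_deriv_subset h)
    simp only [hGε, hG0, sub_self, hG'0, mul_zero, abs_zero]
    positivity

theorem HasCompactSupport.div_right {α β : Type*} [TopologicalSpace α] [GroupWithZero β]
    {f : α → β} (hf : HasCompactSupport f) (g : α → β) :
    HasCompactSupport fun x => f x / g x :=
  hf.mono fun x hx hfx => hx (by simp [hfx])

theorem HasCompactSupport.eventually_abs_div_sub_div_sub_mul_le {G w : ℝ → ℝ}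
    (hG : ContDiff ℝ 1 G) (hGc : HasCompactSupport G) (hw : Continuous w) (hw0 : ∀ x, w x ≠ 0)
    (t : ℝ) {ε : ℝ} (hε : 0 < ε) :
    ∀ᶠ s in 𝓝 t, ∀ x,
      |G (x + (t - s)) / w x - G x / w x - (s - t) * -(deriv G x / w x)| ≤ ε * |s - t| := by
  obtain ⟨δ, hδ, htaylor⟩ := hGc.exists_forall_abs_mul_sub_sub_mul_deriv_le hG (hw.inv₀ hw0) hε
  filter_upwards [eventually_abs_sub_lt t hδ] with s hs x
  rw [abs_sub_comm s t, show G (x + (t - s)) / w x - G x / w x - (s - t) * -(deriv G x / w x)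
    = (w x)⁻¹ * (G (x + (t - s)) - G x - (t - s) * deriv G x) by ring]
  exact htaylor (t - s) (abs_sub_comm s t ▸ hs.le) x

theorem hasDerivWithinAt_integral_of_forall_abs_sub_mul_le {μ : ℝ → Measure ℝ}
    [∀ s, IsFiniteMeasure (μ s)] {u : ℝ → ℝ → ℝ} {u' : ℝ → ℝ} {S : Set ℝ} {t : ℝ}
    (hμcont : ∀ φ : ℝ → ℝ, Continuous φ → (∃ M, ∀ x, |φ x| ≤ M) →
      ContinuousWithinAt (fun s => ∫ x, φ x ∂μ s) S t)
    (hu : ∀ s, Integrable (u s) (μ s)) (hut : ∀ x, u t x = 0)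
    (hu' : Continuous u') (hu'b : ∃ M, ∀ x, |u' x| ≤ M)
    (hrem : ∀ ε > 0, ∀ᶠ s in 𝓝[S] t, ∀ x, |u s x - (s - t) * u' x| ≤ ε * |s - t|) :
    HasDerivWithinAt (fun s => ∫ x, u s x ∂μ s) (∫ x, u' x ∂μ t) S t := by
  obtain ⟨M, hM⟩ := hu'b
  have hu'int (s : ℝ) : Integrable u' (μ s) :=
    .of_bound hu'.aestronglyMeasurable M (Eventually.of_forall hM)
  set C := (μ t).real univ + 1
  have hmass : ∀ᶠ s in 𝓝[S] t, (μ s).real univ ≤ C := by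
    simpa using (hμcont (fun _ => 1) continuous_const ⟨1, by simp⟩).eventually
      (ge_mem_nhds (lt_add_one _))
  have hremainder : (fun s => ∫ x, (u s x - (s - t) * u' x) ∂μ s) =o[𝓝[S] t] (· - t) := by
    refine IsLittleO.of_bound fun c hc => ?_
    filter_upwards [hrem (c / (|C| + 1)) (by positivity), hmass] with s hs hCs
    calc ‖∫ x, (u s x - (s - t) * u' x) ∂μ s‖
        ≤ c / (|C| + 1) * |s - t| * (μ s).real univ :=
          norm_integral_le_of_norm_le_const (Eventually.of_forall hs)
      _ ≤ c / (|C| + 1) * |s - t| * (|C| + 1) := by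
          gcongr
          linarith [le_abs_self C]
      _ = c * ‖s - t‖ := by
          rw [Real.norm_eq_abs]
          field_simp
  have hdrift : (fun s => (s - t) * ((∫ x, u' x ∂μ s) - ∫ x, u' x ∂μ t)) =o[𝓝[S] t]
      (· - t) := by
    simpa using (isBigO_refl (· - t) (𝓝[S] t)).mul_isLittleO
      ((isLittleO_one_iff ℝ).2 (tendsto_sub_nhds_zero_iff.2 (hμcont u' hu' ⟨M, hM⟩)))
  rw [hasDerivWithinAt_iff_isLittleO]
  refine (hremainder.add hdrift).congr_left fun s => ?_
  rw [integral_sub (hu s) ((hu'int s).const_mul _), integral_const_mul]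
  simp only [hut, integral_zero, smul_eq_mul]
  ring

/-- Equal to `1` on `[-n, b]` and to `0` outside `(-(n + 1), b + 1 / (n + 1))`. -/
noncomputable def smoothIicApprox (b : ℝ) (n : ℕ) (x : ℝ) : ℝ :=
  smoothTransition (n + 1 + x) * smoothTransition ((n + 1) * (b - x) + 1)

theorem contDiff_smoothIicApprox (b : ℝ) (n : ℕ) : ContDiff ℝ 1 (smoothIicApprox b n) :=
  (smoothTransition.contDiff.comp (contDiff_const.add contDiff_id)).mul
    (smoothTransition.contDiff.comp
      ((contDiff_const.mul (contDiff_const.sub contDiff_id)).add contDiff_const))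

theorem hasCompactSupport_smoothIicApprox (b : ℝ) (n : ℕ) :
    HasCompactSupport (smoothIicApprox b n) := by
  refine HasCompactSupport.intro (isCompact_Icc (a := -((n : ℝ) + 1)) (b := b + 1)) fun x hx => ?_
  rcases not_and_or.1 hx with hx | hx
  · rw [smoothIicApprox, smoothTransition.zero_of_nonpos (by linarith [not_le.1 hx]), zero_mul]
  · have : 1 ≤ (n + 1 : ℝ) * (x - b) := by nlinarith [not_le.1 hx]
    rw [smoothIicApprox,
      smoothTransition.zero_of_nonpos (x := (n + 1) * (b - x) + 1) (by nlinarith), mul_zero]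

theorem abs_smoothIicApprox_le_one (b : ℝ) (n : ℕ) (x : ℝ) : |smoothIicApprox b n x| ≤ 1 := by
  rw [smoothIicApprox, abs_of_nonneg (mul_nonneg (smoothTransition.nonneg _)
    (smoothTransition.nonneg _))]
  exact mul_le_one₀ (smoothTransition.le_one _) (smoothTransition.nonneg _)
    (smoothTransition.le_one _)

theorem tendsto_smoothIicApprox (b x : ℝ) :
    Tendsto (fun n => smoothIicApprox b n x) atTop (𝓝 ((Iic b).indicator 1 x)) := by
  have hn : Tendsto (fun n : ℕ => (n : ℝ) + 1) atTop atTop :=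
    tendsto_atTop_add_const_right _ _ tendsto_natCast_atTop_atTop
  by_cases hxb : x ≤ b
  · refine tendsto_const_nhds.congr' ?_
    filter_upwards [hn.eventually_ge_atTop (1 - x)] with n hn
    rw [indicator_of_mem (mem_Iic.2 hxb), Pi.one_apply, smoothIicApprox,
      smoothTransition.one_of_one_le (by linarith), one_mul, smoothTransition.one_of_one_le]
    nlinarith [sub_nonneg.2 hxb]
  · refine tendsto_const_nhds.congr' ?_
    filter_upwards [hn.eventually_ge_atTop (x - b)⁻¹] with n hn
    have : 1 ≤ ((n : ℝ) + 1) * (x - b) := by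
      rwa [← div_le_iff₀ (sub_pos.2 (not_le.1 hxb)), one_div]
    rw [indicator_of_notMem (mt mem_Iic.1 hxb), smoothIicApprox,
      smoothTransition.zero_of_nonpos (x := (n + 1) * (b - x) + 1) (by nlinarith), mul_zero]

theorem MeasureTheory.Measure.ext_of_integral_eq_of_contDiff {μ ν : Measure ℝ}
    [IsFiniteMeasure μ] [IsFiniteMeasure ν]
    (h : ∀ g : ℝ → ℝ, ContDiff ℝ 1 g → HasCompactSupport g → ∫ x, g x ∂μ = ∫ x, g x ∂ν) :
    μ = ν := by
  refine Measure.ext_of_Iic μ ν fun b => ?_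
  have hlim (ρ : Measure ℝ) [IsFiniteMeasure ρ] :
      Tendsto (fun n => ∫ x, smoothIicApprox b n x ∂ρ) atTop (𝓝 (ρ.real (Iic b))) := by
    rw [← integral_indicator_one measurableSet_Iic]
    exact tendsto_integral_of_dominated_convergence (fun _ => 1)
      (fun n => (contDiff_smoothIicApprox b n).continuous.aestronglyMeasurable)
      (integrable_const 1) (fun n => Eventually.of_forall (abs_smoothIicApprox_le_one b n))
      (Eventually.of_forall (tendsto_smoothIicApprox b))
  have hreal : μ.real (Iic b) = ν.real (Iic b) := tendsto_nhds_unique (hlim μ) <|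
    (hlim ν).congr fun n => (h _ (contDiff_smoothIicApprox b n)
      (hasCompactSupport_smoothIicApprox b n)).symm
  exact (measureReal_eq_measureReal_iff (measure_ne_top _ _) (measure_ne_top _ _)).1 hreal

theorem deriv_div_one_sub_sub_mul {F G h : ℝ → ℝ} {x : ℝ} (hF : DifferentiableAt ℝ F x)
    (hG : DifferentiableAt ℝ G x) (hFx : 1 - F x ≠ 0) (hdef : h x = deriv F x / (1 - F x)) :
    deriv (fun a => G a / (1 - F a)) x - h x * (G x / (1 - F x)) = deriv G x / (1 - F x) := by
  rw [(hG.hasDerivAt.fun_div (hF.hasDerivAt.const_sub 1) hFx).deriv, hdef]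
  field_simp
  ring

section WeakSolution

variable {F h Υ G : ℝ → ℝ} {μ : ℝ → Measure ℝ} [∀ s, IsFiniteMeasure (μ s)]

theorem hasDerivWithinAt_integral_transported_test (hF : ContDiff ℝ 1 F)
    (hFc : ∀ a : ℝ, 0 < 1 - F a) (hdef : ∀ a, h a = deriv F a / (1 - F a))
    (hμcont : ∀ φ : ℝ → ℝ, Continuous φ → (∃ M, ∀ x, |φ x| ≤ M) →
      ContinuousOn (fun t => ∫ x, φ x ∂(μ t)) (Set.Ici 0))
    (hμPDE : ∀ φ : ℝ → ℝ, ContDiff ℝ 1 φ → HasCompactSupport φ → ∀ t : ℝ, 0 ≤ t →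
      HasDerivWithinAt (fun s => ∫ x, φ x ∂(μ s))
        (φ 0 * Υ t + ∫ x, (deriv φ x - h x * φ x) ∂(μ t)) (Set.Ici 0) t)
    (hG : ContDiff ℝ 1 G) (hGc : HasCompactSupport G) {t : ℝ} (ht : 0 ≤ t) :
    HasDerivWithinAt (fun s => ∫ x, G (x + (t - s)) / (1 - F x) ∂μ s)
      (G 0 / (1 - F 0) * Υ t) (Ici 0) t := by
  have hFne : ∀ a, 1 - F a ≠ 0 := fun a => (hFc a).ne'
  have hw : Continuous fun x => 1 - F x := continuous_const.sub hF.continuous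
  have hint {φ : ℝ → ℝ} (hφ : Continuous φ) (hφc : HasCompactSupport φ) (s : ℝ) :
      Integrable (fun x => φ x / (1 - F x)) (μ s) :=
    (hφ.div hw hFne).integrable_of_hasCompactSupport (hφc.div_right _)
  have hPDE := hμPDE (fun x => G x / (1 - F x)) (hG.div (contDiff_const.sub hF) hFne)
    (hGc.div_right _) t ht
  simp only [deriv_div_one_sub_sub_mul (hF.differentiable one_ne_zero _)
    (hG.differentiable one_ne_zero _) (hFne _) (hdef _)] at hPDE
  set u : ℝ → ℝ → ℝ := fun s x => G (x + (t - s)) / (1 - F x) - G x / (1 - F x)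
  have hu (s : ℝ) : Integrable (u s) (μ s) :=
    (hint (hG.continuous.comp (continuous_add_const _))
      (hGc.comp_homeomorph (Homeomorph.addRight (t - s))) s).sub (hint hG.continuous hGc s)
  have hu' : Continuous fun x => -(deriv G x / (1 - F x)) :=
    ((hG.continuous_deriv le_rfl).div hw hFne).neg
  have hmoving := hasDerivWithinAt_integral_of_forall_abs_sub_mul_le
    (fun φ hφ hφb => hμcont φ hφ hφb t ht) hu (by simp [u]) hu'
    (hu'.bounded_above_of_compact_support (hGc.deriv.div_right _).neg)
    fun ε hε => nhdsWithin_le_nhds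
      (hGc.eventually_abs_div_sub_div_sub_mul_le hG hw hFne t hε)
  have hsplit : (fun s => ∫ x, G (x + (t - s)) / (1 - F x) ∂μ s)
      = fun s => (∫ x, G x / (1 - F x) ∂μ s) + ∫ x, u s x ∂μ s := by
    funext s
    rw [← integral_add (hint hG.continuous hGc s) (hu s)]
    simp only [u, add_sub_cancel]
  rw [hsplit]
  refine (hPDE.fun_add hmoving).congr_deriv ?_
  rw [integral_neg]
  ring

theorem hasDerivWithinAt_integral_backward_solution (hF : ContDiff ℝ 1 F)
    (hFc : ∀ a : ℝ, 0 < 1 - F a) (hdef : ∀ a, h a = deriv F a / (1 - F a))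
    (hμcont : ∀ φ : ℝ → ℝ, Continuous φ → (∃ M, ∀ x, |φ x| ≤ M) →
      ContinuousOn (fun t => ∫ x, φ x ∂(μ t)) (Set.Ici 0))
    (hμPDE : ∀ φ : ℝ → ℝ, ContDiff ℝ 1 φ → HasCompactSupport φ → ∀ t : ℝ, 0 ≤ t →
      HasDerivWithinAt (fun s => ∫ x, φ x ∂(μ s))
        (φ 0 * Υ t + ∫ x, (deriv φ x - h x * φ x) ∂(μ t)) (Set.Ici 0) t)
    (hG : ContDiff ℝ 1 G) (hGc : HasCompactSupport G) (T : ℝ) {t : ℝ} (ht : 0 ≤ t) :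
    HasDerivWithinAt (fun s => ∫ x, G (x + (T - s)) / (1 - F x) ∂μ s)
      (G (T - t) / (1 - F 0) * Υ t) (Ici 0) t := by
  have hshift : HasCompactSupport fun y => G (y + (T - t)) :=
    hGc.comp_homeomorph (Homeomorph.addRight (T - t))
  simpa only [Function.comp_apply, id, zero_add, add_assoc, sub_add_sub_cancel'] using
    hasDerivWithinAt_integral_transported_test hF hFc hdef hμcont hμPDE
      (hG.comp (contDiff_id.add contDiff_const)) hshift ht

end WeakSolution

theorem eqOn_Ici_of_hasDerivWithinAt_eq {f g f' : ℝ → ℝ}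
    (hf : ∀ t, 0 ≤ t → HasDerivWithinAt f (f' t) (Ici 0) t)
    (hg : ∀ t, 0 ≤ t → HasDerivWithinAt g (f' t) (Ici 0) t) (h0 : f 0 = g 0) :
    EqOn f g (Ici 0) := fun T hT =>
  eq_of_has_deriv_right_eq (fun t ht => (hf t ht.1).mono (Ici_subset_Ici.2 ht.1))
    (fun t ht => (hg t ht.1).mono (Ici_subset_Ici.2 ht.1))
    (fun t ht => (hf t ht.1).continuousWithinAt.mono Icc_subset_Ici_self)
    (fun t ht => (hg t ht.1).continuousWithinAt.mono Icc_subset_Ici_self) h0 T ⟨hT, le_rfl⟩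

theorem measure_valued_PDE_uniqueness_general
    (F : ℝ → ℝ) (hF : ContDiff ℝ 1 F)
    (hFc : ∀ a : ℝ, 0 < 1 - F a)
    (h : ℝ → ℝ) (hdef : ∀ a, h a = deriv F a / (1 - F a))
    (Υ : ℝ → ℝ)
    (μ ν : ℝ → Measure ℝ)
    (hμfin : ∀ t, IsFiniteMeasure (μ t)) (hνfin : ∀ t, IsFiniteMeasure (ν t))
    -- weak continuity of `t ↦ μ_t` and `t ↦ ν_t`
    (hμcont : ∀ φ : ℝ → ℝ, Continuous φ → (∃ M, ∀ x, |φ x| ≤ M) →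
      ContinuousOn (fun t => ∫ x, φ x ∂(μ t)) (Set.Ici 0))
    (hνcont : ∀ φ : ℝ → ℝ, Continuous φ → (∃ M, ∀ x, |φ x| ≤ M) →
      ContinuousOn (fun t => ∫ x, φ x ∂(ν t)) (Set.Ici 0))
    (h0 : μ 0 = ν 0)
    (hμPDE : ∀ φ : ℝ → ℝ, ContDiff ℝ 1 φ → HasCompactSupport φ → ∀ t : ℝ, 0 ≤ t →
      HasDerivWithinAt (fun s => ∫ x, φ x ∂(μ s))
        (φ 0 * Υ t + ∫ x, (deriv φ x - h x * φ x) ∂(μ t)) (Set.Ici 0) t)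
    (hνPDE : ∀ φ : ℝ → ℝ, ContDiff ℝ 1 φ → HasCompactSupport φ → ∀ t : ℝ, 0 ≤ t →
      HasDerivWithinAt (fun s => ∫ x, φ x ∂(ν s))
        (φ 0 * Υ t + ∫ x, (deriv φ x - h x * φ x) ∂(ν t)) (Set.Ici 0) t) :
    ∀ t : ℝ, 0 ≤ t → μ t = ν t := by
  intro T hT
  refine Measure.ext_of_integral_eq_of_contDiff fun g hg hgc => ?_
  have hG : ContDiff ℝ 1 fun x => (1 - F x) * g x := (contDiff_const.sub hF).mul hg
  have hGc : HasCompactSupport fun x => (1 - F x) * g x := hgc.mul_left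
  have hpairing := eqOn_Ici_of_hasDerivWithinAt_eq
    (fun t ht => hasDerivWithinAt_integral_backward_solution hF hFc hdef hμcont hμPDE hG hGc T ht)
    (fun t ht => hasDerivWithinAt_integral_backward_solution hF hFc hdef hνcont hνPDE hG hGc T ht)
    (by rw [h0]) hT
  simpa only [sub_self, add_zero, mul_div_cancel_left₀ _ (hFc _).ne'] using hpairing

/-- **Uniqueness for the measure-valued FLLN transport PDE.**
Assume `F ∈ C¹` with `F(a) > 0` for `a > 0`, `Fᶜ = 1 - F > 0`, bounded hazard
`h = F'/Fᶜ`, and `Ῡ` continuous.  If two weakly-continuous families of finite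
nonnegative measures `μ, ν` on `ℝ₊` with `μ₀ = ν₀` both satisfy, for every
`φ ∈ C¹_c(ℝ₊)`, `d/dt μ_t(φ) = φ(0) Ῡ(t) + μ_t(φ' - h φ)`, then `μ_t = ν_t`
for all `t ≥ 0`. -/
theorem measure_valued_PDE_uniqueness
    (F : ℝ → ℝ) (hF : ContDiff ℝ 1 F)
    (hFpos : ∀ a : ℝ, 0 < a → 0 < F a)
    (hFc : ∀ a : ℝ, 0 < 1 - F a)
    (h : ℝ → ℝ) (hdef : ∀ a, h a = deriv F a / (1 - F a))
    (hbd : ∃ M, ∀ a, |h a| ≤ M)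
    (Υ : ℝ → ℝ) (hΥ : Continuous Υ)
    (μ ν : ℝ → Measure ℝ)
    (hμfin : ∀ t, IsFiniteMeasure (μ t)) (hνfin : ∀ t, IsFiniteMeasure (ν t))
    (hμsupp : ∀ t, μ t (Set.Iio 0) = 0) (hνsupp : ∀ t, ν t (Set.Iio 0) = 0)
    -- weak continuity of `t ↦ μ_t` and `t ↦ ν_t`
    (hμcont : ∀ φ : ℝ → ℝ, Continuous φ → (∃ M, ∀ x, |φ x| ≤ M) →
      ContinuousOn (fun t => ∫ x, φ x ∂(μ t)) (Set.Ici 0))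
    (hνcont : ∀ φ : ℝ → ℝ, Continuous φ → (∃ M, ∀ x, |φ x| ≤ M) →
      ContinuousOn (fun t => ∫ x, φ x ∂(ν t)) (Set.Ici 0))
    (h0 : μ 0 = ν 0)
    (hμPDE : ∀ φ : ℝ → ℝ, ContDiff ℝ 1 φ → HasCompactSupport φ → ∀ t : ℝ, 0 ≤ t →
      HasDerivWithinAt (fun s => ∫ x, φ x ∂(μ s))
        (φ 0 * Υ t + ∫ x, (deriv φ x - h x * φ x) ∂(μ t)) (Set.Ici 0) t)
    (hνPDE : ∀ φ : ℝ → ℝ, ContDiff ℝ 1 φ → HasCompactSupport φ → ∀ t : ℝ, 0 ≤ t →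
      HasDerivWithinAt (fun s => ∫ x, φ x ∂(ν s))
        (φ 0 * Υ t + ∫ x, (deriv φ x - h x * φ x) ∂(ν t)) (Set.Ici 0) t) :
    ∀ t : ℝ, 0 ≤ t → μ t = ν t :=
  measure_valued_PDE_uniqueness_general F hF hFc h hdef Υ μ ν hμfin hνfin hμcont hνcont h0 hμPDE
    hνPDE
end

section
/- Let (τ_j) be i.i.d. random variables with law μ̄̄_0 on [0,∞), let φ ∈ H^1(ℝ_+), and for t ≥ 0 set Z_{j,t} = φ(τ_j + t), Z̄_{j,t} = Z_{j,t} − E[Z_{j,t}]. Then for any t₁ < t < t₂ and any N, n with n ≤ N: (1/N²) E[ ( Σ_{j=1}^n (Z̄_{j,t} − Z̄_{j,t₁}) )² ( Σ_{j=1}^n (Z̄_{j,t₂} − Z̄_{j,t}) )² ] ≤ C c_φ^4 (t₂ − t₁)², where c_φ² = ∫_0^∞ |φ'(r)|² dr and C is a universal constant. -/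
/-!
Write `c = √(∫₀^∞ φ'²)`. By Cauchy–Schwarz `|φ y - φ x| ≤ c √(y - x)` on `ℝ₊`, and together with
`φ ∈ L²(ℝ₊)` this makes `φ` bounded. So the summands `Z̄_{j,t} - Z̄_{j,t₁}` and
`Z̄_{j,t₂} - Z̄_{j,t}` are i.i.d., centred, and bounded by `a = 2c√(t - t₁)` and
`b = 2c√(t₂ - t)`. For a sum `S` of independent centred variables, expanding `E[(S + X)⁴]`
binomially leaves only `E S⁴ + 6 E S² E X² + E X⁴`, so `E S⁴ ≤ 3 n² a⁴` by induction on `n`.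
Cauchy–Schwarz then bounds the mixed moment by `3 n² a² b² = 48 n² c⁴ (t - t₁)(t₂ - t)`, and
`n ≤ N`, `(t - t₁)(t₂ - t) ≤ (t₂ - t₁)²` conclude.
-/

open Real Set MeasureTheory ProbabilityTheory
open scoped ENNReal

section CauchySchwarz

variable {α : Type*} [MeasurableSpace α] {μ : Measure α}

theorem integral_mul_le_sqrt_integral_sq_mul_sqrt_integral_sq {f g : α → ℝ}
    (hf : 0 ≤ᵐ[μ] f) (hg : 0 ≤ᵐ[μ] g) (hf₂ : MemLp f 2 μ) (hg₂ : MemLp g 2 μ) :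
    ∫ a, f a * g a ∂μ ≤ √(∫ a, f a ^ 2 ∂μ) * √(∫ a, g a ^ 2 ∂μ) := by
  have h := integral_mul_le_Lp_mul_Lq_of_nonneg Real.HolderConjugate.two_two hf hg
    (by simpa using hf₂) (by simpa using hg₂)
  simpa only [Real.rpow_two, Real.sqrt_eq_rpow] using h

theorem abs_integral_le_sqrt_integral_sq_mul_sqrt_measureReal [IsFiniteMeasure μ] {f : α → ℝ}
    (hf : MemLp f 2 μ) : |∫ a, f a ∂μ| ≤ √(∫ a, f a ^ 2 ∂μ) * √(μ.real univ) := by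
  calc |∫ a, f a ∂μ| ≤ ∫ a, |f a| * 1 ∂μ := by
        simpa only [mul_one] using abs_integral_le_integral_abs
    _ ≤ √(∫ a, |f a| ^ 2 ∂μ) * √(∫ _a, (1 : ℝ) ^ 2 ∂μ) :=
        integral_mul_le_sqrt_integral_sq_mul_sqrt_integral_sq (.of_forall fun _ => abs_nonneg _)
          (.of_forall fun _ => zero_le_one) hf.abs (memLp_const 1)
    _ = √(∫ a, f a ^ 2 ∂μ) * √(μ.real univ) := by simp

end CauchySchwarz

theorem abs_sub_le_sqrt_integral_sq_mul_sqrt {φ φ' : ℝ → ℝ}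
    (hφ' : MemLp φ' 2 (volume.restrict (Ici 0)))
    (hrep : ∀ t, 0 ≤ t → φ t = φ 0 + ∫ s in (0 : ℝ)..t, φ' s) {x y : ℝ} (hx : 0 ≤ x)
    (hxy : x ≤ y) : |φ y - φ x| ≤ √(∫ r in Ici 0, φ' r ^ 2) * √(y - x) := by
  have hsub : Ioc x y ⊆ Ici 0 := fun r hr => hx.trans hr.1.le
  have hφ'xy : MemLp φ' 2 (volume.restrict (Ioc x y)) :=
    hφ'.mono_measure (Measure.restrict_mono hsub le_rfl)
  have hint (z : ℝ) (hz : 0 ≤ z) : IntervalIntegrable φ' volume 0 z := by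
    rw [intervalIntegrable_iff_integrableOn_Ioc_of_le hz]
    exact (hφ'.mono_measure (Measure.restrict_mono
      (Ioc_subset_Ioi_self.trans Ioi_subset_Ici_self) le_rfl)).integrable one_le_two
  have hdiff : φ y - φ x = ∫ s in Ioc x y, φ' s := by
    rw [hrep y (hx.trans hxy), hrep x hx, ← intervalIntegral.integral_of_le hxy,
      ← intervalIntegral.integral_interval_sub_left (hint y (hx.trans hxy)) (hint x hx)]
    ring
  calc |φ y - φ x| ≤ √(∫ r in Ioc x y, φ' r ^ 2) * √(volume.real (Ioc x y)) := by
        simpa [hdiff] using abs_integral_le_sqrt_integral_sq_mul_sqrt_measureReal hφ'xy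
    _ ≤ √(∫ r in Ici 0, φ' r ^ 2) * √(y - x) := by
        rw [Real.volume_real_Ioc_of_le hxy]
        gcongr
        exacts [.of_forall fun _ => sq_nonneg _, hφ'.integrable_sq]

theorem abs_le_add_sqrt_integral_sq_of_abs_sub_le {f : ℝ → ℝ} {c : ℝ} (hc : 0 ≤ c)
    (hf : IntegrableOn (fun x => f x ^ 2) (Ici 0))
    (hold : ∀ x y, 0 ≤ x → x ≤ y → |f y - f x| ≤ c * √(y - x)) {x : ℝ} (hx : 0 ≤ x) :
    |f x| ≤ c + √(∫ y in Ici 0, f y ^ 2) := by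
  rcases le_or_gt |f x| c with h | h
  · linarith [sqrt_nonneg (∫ y in Ici 0, f y ^ 2)]
  have hsub : Icc x (x + 1) ⊆ Ici 0 := fun y hy => hx.trans hy.1
  have hlow : ∀ y ∈ Icc x (x + 1), (|f x| - c) ^ 2 ≤ f y ^ 2 := by
    intro y hy
    have hyx : |f y - f x| ≤ c :=
      (hold x y hx hy.1).trans (mul_le_of_le_one_right hc (sqrt_le_one.2 (by linarith [hy.2])))
    have : |f x| - c ≤ |f y| := by
      linarith [abs_sub_abs_le_abs_sub (f x) (f y), abs_sub_comm (f x) (f y)]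
    exact (pow_le_pow_left₀ (sub_nonneg.2 h.le) this 2).trans_eq (sq_abs _)
  have hK : (|f x| - c) ^ 2 ≤ ∫ y in Ici 0, f y ^ 2 :=
    calc (|f x| - c) ^ 2 = (|f x| - c) ^ 2 * volume.real (Icc x (x + 1)) := by simp
      _ ≤ ∫ y in Icc x (x + 1), f y ^ 2 :=
        setIntegral_ge_of_const_le_real measurableSet_Icc measure_Icc_lt_top.ne hlow
          (hf.mono_set hsub)
      _ ≤ ∫ y in Ici 0, f y ^ 2 :=
        setIntegral_mono_set hf (.of_forall fun _ => sq_nonneg _) hsub.eventuallyLE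
  linarith [le_abs_self (|f x| - c), abs_le_sqrt hK]

theorem continuous_of_abs_sub_le_mul_sqrt {f : ℝ → ℝ} {c : ℝ}
    (hold : ∀ x y, x ≤ y → |f y - f x| ≤ c * √(y - x)) : Continuous f := by
  rw [continuous_iff_continuousAt]
  intro x
  have hx (y : ℝ) : dist (f y) (f x) ≤ c * √|y - x| := by
    rw [Real.dist_eq]
    rcases le_total x y with hxy | hyx
    · simpa [abs_of_nonneg (sub_nonneg.2 hxy)] using hold x y hxy
    · rw [abs_sub_comm, abs_sub_comm y x, abs_of_nonneg (sub_nonneg.2 hyx)]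
      exact hold y x hyx
  refine tendsto_iff_dist_tendsto_zero.2 (squeeze_zero (fun _ => dist_nonneg) hx ?_)
  have : Continuous fun y => c * √|y - x| := by fun_prop
  simpa using this.tendsto x

theorem abs_comp_max_zero_sub_le {f : ℝ → ℝ} {c : ℝ} (hc : 0 ≤ c)
    (hold : ∀ x y, 0 ≤ x → x ≤ y → |f y - f x| ≤ c * √(y - x)) {x y : ℝ} (hxy : x ≤ y) :
    |f (max y 0) - f (max x 0)| ≤ c * √(y - x) := by
  refine (hold _ _ (le_max_right x 0) (max_le_max hxy le_rfl)).trans ?_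
  refine mul_le_mul_of_nonneg_left (sqrt_le_sqrt ?_) hc
  exact (le_abs_self _).trans ((abs_max_sub_max_le_abs y x 0).trans_eq
    (abs_of_nonneg (sub_nonneg.2 hxy)))

namespace ProbabilityTheory

open Finset

variable {Ω : Type*} [MeasurableSpace Ω] {P : Measure Ω}

theorem IndepFun.integral_add_pow {S T : Ω → ℝ} (h : IndepFun S T P)
    (hS : ∀ k : ℕ, Integrable (fun ω => S ω ^ k) P) (hT : ∀ k : ℕ, Integrable (fun ω => T ω ^ k) P)
    (p : ℕ) :
    ∫ ω, (S ω + T ω) ^ p ∂P =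
      ∑ k ∈ range (p + 1), (∫ ω, S ω ^ k ∂P) * (∫ ω, T ω ^ (p - k) ∂P) * p.choose k := by
  have hpow (k l : ℕ) : IndepFun (fun ω => S ω ^ k) (fun ω => T ω ^ l) P :=
    h.comp (measurable_id.pow_const k) (measurable_id.pow_const l)
  simp_rw [add_pow]
  rw [integral_finsetSum (f := fun k ω => S ω ^ k * T ω ^ (p - k) * (p.choose k : ℝ)) _
    fun k _ => ((hpow k (p - k)).integrable_mul (hS k) (hT _)).mul_const _]
  refine sum_congr rfl fun k _ => ?_
  rw [integral_mul_const, (hpow k _).integral_fun_mul_eq_mul_integral (hS k).1 (hT _).1]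

variable {X : ℕ → Ω → ℝ} {a : ℝ}

theorem ae_abs_sum_range_le (hX : ∀ j, ∀ᵐ ω ∂P, |X j ω| ≤ a) (n : ℕ) :
    ∀ᵐ ω ∂P, |∑ j ∈ range n, X j ω| ≤ n * a := by
  filter_upwards [ae_all_iff.2 hX] with ω hω
  calc |∑ j ∈ range n, X j ω| ≤ ∑ j ∈ range n, |X j ω| := abs_sum_le_sum_abs _ _
    _ ≤ n * a := (sum_le_sum fun j _ => hω j).trans_eq (by simp)

theorem memLp_pow_of_ae_abs_le [IsFiniteMeasure P] {f : Ω → ℝ} (hf : AEStronglyMeasurable f P)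
    {C : ℝ} (hC : ∀ᵐ ω ∂P, |f ω| ≤ C) (k : ℕ) (p : ℝ≥0∞) : MemLp (fun ω => f ω ^ k) p P :=
  .of_bound (hf.pow k) (C ^ k) <| hC.mono fun ω hω => by
    simpa only [norm_pow, Real.norm_eq_abs] using pow_le_pow_left₀ (abs_nonneg _) hω k

theorem integrable_pow_of_ae_abs_le [IsFiniteMeasure P] {f : Ω → ℝ} (hf : AEStronglyMeasurable f P)
    {C : ℝ} (hC : ∀ᵐ ω ∂P, |f ω| ≤ C) (k : ℕ) : Integrable (fun ω => f ω ^ k) P :=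
  memLp_one_iff_integrable.1 (memLp_pow_of_ae_abs_le hf hC k 1)

variable [IsProbabilityMeasure P]

theorem integral_pow_le_of_ae_abs_le {f : Ω → ℝ} {C : ℝ} (hC : ∀ᵐ ω ∂P, |f ω| ≤ C) (k : ℕ) :
    ∫ ω, f ω ^ k ∂P ≤ C ^ k := by
  have h := norm_integral_le_of_norm_le_const (μ := P) (f := fun ω => f ω ^ k) <|
    hC.mono fun ω hω => by
      simpa only [norm_pow, Real.norm_eq_abs] using pow_le_pow_left₀ (abs_nonneg _) hω k
  simpa using (le_abs_self _).trans h

theorem iIndepFun.integral_sum_range_succ_pow (hind : iIndepFun X P) (hmeas : ∀ j, Measurable (X j))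
    (hX : ∀ j, ∀ᵐ ω ∂P, |X j ω| ≤ a) (m p : ℕ) :
    ∫ ω, (∑ j ∈ range (m + 1), X j ω) ^ p ∂P =
      ∑ k ∈ range (p + 1), (∫ ω, (∑ j ∈ range m, X j ω) ^ k ∂P) * (∫ ω, X m ω ^ (p - k) ∂P)
        * p.choose k := by
  have h := hind.indepFun_finsetSum_of_notMem hmeas (s := range m) (i := m) (by simp)
  simp_rw [fun ω => sum_range_succ (fun j => X j ω) m]
  refine IndepFun.integral_add_pow (S := fun ω => ∑ j ∈ range m, X j ω) ?_ ?_ ?_ p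
  · simpa only [sum_fn] using h
  · exact integrable_pow_of_ae_abs_le
      (aestronglyMeasurable_fun_sum _ fun j _ => (hmeas j).aestronglyMeasurable)
      (ae_abs_sum_range_le hX m)
  · exact integrable_pow_of_ae_abs_le (hmeas m).aestronglyMeasurable (hX m)

theorem integral_sum_range_eq_zero (hmeas : ∀ j, Measurable (X j))
    (hX : ∀ j, ∀ᵐ ω ∂P, |X j ω| ≤ a) (hcent : ∀ j, ∫ ω, X j ω ∂P = 0) (n : ℕ) :
    ∫ ω, ∑ j ∈ range n, X j ω ∂P = 0 := by
  rw [integral_finsetSum _ fun j _ => by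
    simpa using integrable_pow_of_ae_abs_le (hmeas j).aestronglyMeasurable (hX j) 1]
  simp [hcent]

theorem iIndepFun.integral_sum_range_succ_sq (hind : iIndepFun X P)
    (hmeas : ∀ j, Measurable (X j)) (hX : ∀ j, ∀ᵐ ω ∂P, |X j ω| ≤ a)
    (hcent : ∀ j, ∫ ω, X j ω ∂P = 0) (m : ℕ) :
    ∫ ω, (∑ j ∈ range (m + 1), X j ω) ^ 2 ∂P =
      ∫ ω, (∑ j ∈ range m, X j ω) ^ 2 ∂P + ∫ ω, X m ω ^ 2 ∂P := by
  rw [hind.integral_sum_range_succ_pow hmeas hX]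
  simp [sum_range_succ, integral_sum_range_eq_zero hmeas hX hcent, hcent, add_comm]

theorem iIndepFun.integral_sum_range_succ_pow_four (hind : iIndepFun X P)
    (hmeas : ∀ j, Measurable (X j)) (hX : ∀ j, ∀ᵐ ω ∂P, |X j ω| ≤ a)
    (hcent : ∀ j, ∫ ω, X j ω ∂P = 0) (m : ℕ) :
    ∫ ω, (∑ j ∈ range (m + 1), X j ω) ^ 4 ∂P =
      ∫ ω, (∑ j ∈ range m, X j ω) ^ 4 ∂P
        + 6 * (∫ ω, (∑ j ∈ range m, X j ω) ^ 2 ∂P) * (∫ ω, X m ω ^ 2 ∂P) + ∫ ω, X m ω ^ 4 ∂P := by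
  rw [hind.integral_sum_range_succ_pow hmeas hX]
  -- the terms with an odd power of either summand vanish, both being centred
  simp [sum_range_succ, integral_sum_range_eq_zero hmeas hX hcent, hcent,
    show Nat.choose 4 2 = 6 from rfl, add_comm, add_assoc, mul_comm, mul_left_comm]

theorem iIndepFun.integral_sum_range_sq_le (hind : iIndepFun X P) (hmeas : ∀ j, Measurable (X j))
    (hX : ∀ j, ∀ᵐ ω ∂P, |X j ω| ≤ a) (hcent : ∀ j, ∫ ω, X j ω ∂P = 0) (n : ℕ) :
    ∫ ω, (∑ j ∈ range n, X j ω) ^ 2 ∂P ≤ n * a ^ 2 := by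
  induction n with
  | zero => simp
  | succ m ih =>
    rw [hind.integral_sum_range_succ_sq hmeas hX hcent]
    push_cast
    linarith [integral_pow_le_of_ae_abs_le (hX m) 2]

theorem iIndepFun.integral_sum_range_pow_four_le (hind : iIndepFun X P)
    (hmeas : ∀ j, Measurable (X j)) (hX : ∀ j, ∀ᵐ ω ∂P, |X j ω| ≤ a)
    (hcent : ∀ j, ∫ ω, X j ω ∂P = 0) (n : ℕ) :
    ∫ ω, (∑ j ∈ range n, X j ω) ^ 4 ∂P ≤ 3 * n ^ 2 * a ^ 4 := by
  induction n with
  | zero => simp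
  | succ m ih =>
    rw [hind.integral_sum_range_succ_pow_four hmeas hX hcent]
    have hSX : (∫ ω, (∑ j ∈ range m, X j ω) ^ 2 ∂P) * ∫ ω, X m ω ^ 2 ∂P ≤ (m * a ^ 2) * a ^ 2 :=
      mul_le_mul (hind.integral_sum_range_sq_le hmeas hX hcent m)
        (integral_pow_le_of_ae_abs_le (hX m) 2) (integral_nonneg fun _ => sq_nonneg _)
        (by positivity)
    push_cast
    nlinarith [integral_pow_le_of_ae_abs_le (hX m) 4, pow_nonneg (sq_nonneg a) 2]

theorem integral_sq_sum_range_mul_sq_sum_range_le {Y : ℕ → Ω → ℝ} {b : ℝ}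
    (hXind : iIndepFun X P) (hYind : iIndepFun Y P)
    (hXmeas : ∀ j, Measurable (X j)) (hYmeas : ∀ j, Measurable (Y j))
    (hX : ∀ j, ∀ᵐ ω ∂P, |X j ω| ≤ a) (hY : ∀ j, ∀ᵐ ω ∂P, |Y j ω| ≤ b)
    (hXcent : ∀ j, ∫ ω, X j ω ∂P = 0) (hYcent : ∀ j, ∫ ω, Y j ω ∂P = 0) (n : ℕ) :
    ∫ ω, (∑ j ∈ range n, X j ω) ^ 2 * (∑ j ∈ range n, Y j ω) ^ 2 ∂P ≤
      3 * n ^ 2 * a ^ 2 * b ^ 2 := by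
  have hXsum : AEStronglyMeasurable (fun ω => ∑ j ∈ range n, X j ω) P :=
    aestronglyMeasurable_fun_sum _ fun j _ => (hXmeas j).aestronglyMeasurable
  have hYsum : AEStronglyMeasurable (fun ω => ∑ j ∈ range n, Y j ω) P :=
    aestronglyMeasurable_fun_sum _ fun j _ => (hYmeas j).aestronglyMeasurable
  calc _ ≤ √(∫ ω, ((∑ j ∈ range n, X j ω) ^ 2) ^ 2 ∂P)
          * √(∫ ω, ((∑ j ∈ range n, Y j ω) ^ 2) ^ 2 ∂P) :=
        integral_mul_le_sqrt_integral_sq_mul_sqrt_integral_sq (.of_forall fun _ => sq_nonneg _)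
          (.of_forall fun _ => sq_nonneg _)
          (memLp_pow_of_ae_abs_le hXsum (ae_abs_sum_range_le hX n) 2 2)
          (memLp_pow_of_ae_abs_le hYsum (ae_abs_sum_range_le hY n) 2 2)
    _ ≤ √(3 * n ^ 2 * a ^ 4) * √(3 * n ^ 2 * b ^ 4) := by
        simp only [← pow_mul]
        gcongr
        · exact hXind.integral_sum_range_pow_four_le hXmeas hX hXcent n
        · exact hYind.integral_sum_range_pow_four_le hYmeas hY hYcent n
    _ = 3 * n ^ 2 * a ^ 2 * b ^ 2 := by
        rw [← sqrt_mul (by positivity), show 3 * (n : ℝ) ^ 2 * a ^ 4 * (3 * n ^ 2 * b ^ 4) =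
          (3 * n ^ 2 * a ^ 2 * b ^ 2) ^ 2 by ring, sqrt_sq (by positivity)]

theorem iIndepFun.integral_sq_sum_comp_mul_sq_sum_comp_le {α : Type*} [MeasurableSpace α]
    {ρ : Measure α} {τ : ℕ → Ω → α} (hind : iIndepFun τ P) (hτ : ∀ j, Measurable (τ j))
    (hlaw : ∀ j, P.map (τ j) = ρ) {f g : α → ℝ} {b : ℝ} (hf : Measurable f) (hg : Measurable g)
    (hfa : ∀ᵐ x ∂ρ, |f x| ≤ a) (hgb : ∀ᵐ x ∂ρ, |g x| ≤ b)
    (hf₀ : ∫ x, f x ∂ρ = 0) (hg₀ : ∫ x, g x ∂ρ = 0) (n : ℕ) :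
    ∫ ω, (∑ j ∈ range n, f (τ j ω)) ^ 2 * (∑ j ∈ range n, g (τ j ω)) ^ 2 ∂P ≤
      3 * n ^ 2 * a ^ 2 * b ^ 2 := by
  have hae {h : α → ℝ} {C : ℝ} (hC : ∀ᵐ x ∂ρ, |h x| ≤ C) (j : ℕ) : ∀ᵐ ω ∂P, |h (τ j ω)| ≤ C :=
    ae_of_ae_map (hτ j).aemeasurable (p := fun x => |h x| ≤ C) (by rwa [hlaw j])
  have hmean {h : α → ℝ} (hh : Measurable h) (h₀ : ∫ x, h x ∂ρ = 0) (j : ℕ) :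
      ∫ ω, h (τ j ω) ∂P = 0 := by
    rwa [← integral_map (hτ j).aemeasurable hh.aestronglyMeasurable, hlaw j]
  exact integral_sq_sum_range_mul_sq_sum_range_le (hind.comp _ fun _ => hf)
    (hind.comp _ fun _ => hg) (fun j => hf.comp (hτ j)) (fun j => hg.comp (hτ j))
    (hae hfa) (hae hgb) (hmean hf hf₀) (hmean hg hg₀) n

end ProbabilityTheory

-- `centeredIncrement ρ ψ s t a` is `Z̄_t - Z̄_s` for an individual of initial age `a`.
noncomputable def centeredIncrement (ρ : Measure ℝ) (ψ : ℝ → ℝ) (s t a : ℝ) : ℝ :=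
  (ψ (a + t) - ∫ b, ψ (b + t) ∂ρ) - (ψ (a + s) - ∫ b, ψ (b + s) ∂ρ)

section CenteredIncrement

variable {ρ : Measure ℝ} {ψ : ℝ → ℝ} {s t : ℝ}

theorem measurable_centeredIncrement (hψ : Measurable ψ) :
    Measurable (centeredIncrement ρ ψ s t) := by
  unfold centeredIncrement
  fun_prop

variable [IsProbabilityMeasure ρ]

theorem integral_centeredIncrement (hs : Integrable (fun a => ψ (a + s)) ρ)
    (ht : Integrable (fun a => ψ (a + t)) ρ) : ∫ a, centeredIncrement ρ ψ s t a ∂ρ = 0 := by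
  unfold centeredIncrement
  rw [integral_sub (f := fun a => ψ (a + t) - ∫ b, ψ (b + t) ∂ρ)
      (g := fun a => ψ (a + s) - ∫ b, ψ (b + s) ∂ρ) (ht.sub (integrable_const _))
      (hs.sub (integrable_const _)),
    integral_sub ht (integrable_const _), integral_sub hs (integrable_const _)]
  simp

theorem abs_centeredIncrement_le (hs : Integrable (fun a => ψ (a + s)) ρ)
    (ht : Integrable (fun a => ψ (a + t)) ρ) {C : ℝ} (hC : ∀ a, |ψ (a + t) - ψ (a + s)| ≤ C)
    (a : ℝ) : |centeredIncrement ρ ψ s t a| ≤ 2 * C := by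
  have hmean : |∫ b, (ψ (b + t) - ψ (b + s)) ∂ρ| ≤ C := by
    simpa using norm_integral_le_of_norm_le_const (μ := ρ)
      (f := fun b => ψ (b + t) - ψ (b + s)) (.of_forall hC)
  rw [integral_sub ht hs] at hmean
  calc |centeredIncrement ρ ψ s t a|
      = |(ψ (a + t) - ψ (a + s)) - ((∫ b, ψ (b + t) ∂ρ) - ∫ b, ψ (b + s) ∂ρ)| := by
        rw [centeredIncrement]; ring_nf
    _ ≤ |ψ (a + t) - ψ (a + s)| + |(∫ b, ψ (b + t) ∂ρ) - ∫ b, ψ (b + s) ∂ρ| := abs_sub _ _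
    _ ≤ 2 * C := by linarith [hC a]

end CenteredIncrement

theorem integral_sq_sum_centeredIncrement_mul_sq_sum_centeredIncrement_le {Ω : Type*}
    [MeasurableSpace Ω] {P : Measure Ω} [IsProbabilityMeasure P] {ρ : Measure ℝ}
    [IsProbabilityMeasure ρ] {τ : ℕ → Ω → ℝ} (hind : iIndepFun τ P) (hτ : ∀ j, Measurable (τ j))
    (hlaw : ∀ j, P.map (τ j) = ρ) {ψ : ℝ → ℝ} {c B : ℝ}
    (hold : ∀ x y, x ≤ y → |ψ y - ψ x| ≤ c * √(y - x)) (hB : ∀ x, |ψ x| ≤ B)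
    {t₁ t t₂ : ℝ} (ht₁ : t₁ ≤ t) (ht₂ : t ≤ t₂) (n : ℕ) :
    ∫ ω, (∑ j ∈ Finset.range n, centeredIncrement ρ ψ t₁ t (τ j ω)) ^ 2
        * (∑ j ∈ Finset.range n, centeredIncrement ρ ψ t t₂ (τ j ω)) ^ 2 ∂P ≤
      48 * n ^ 2 * c ^ 4 * ((t - t₁) * (t₂ - t)) := by
  have hψ : Measurable ψ := (continuous_of_abs_sub_le_mul_sqrt hold).measurable
  have hint (s : ℝ) : Integrable (fun a => ψ (a + s)) ρ :=
    .of_bound (hψ.comp (measurable_add_const s)).aestronglyMeasurable B (.of_forall fun _ => hB _)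
  have hincr {s u : ℝ} (hsu : s ≤ u) (a : ℝ) :
      |centeredIncrement ρ ψ s u a| ≤ 2 * (c * √(u - s)) :=
    abs_centeredIncrement_le (hint s) (hint u)
      (fun a => by simpa using hold (a + s) (a + u) (by linarith)) a
  calc _ ≤ 3 * n ^ 2 * (2 * (c * √(t - t₁))) ^ 2 * (2 * (c * √(t₂ - t))) ^ 2 :=
        hind.integral_sq_sum_comp_mul_sq_sum_comp_le hτ hlaw (measurable_centeredIncrement hψ)
          (measurable_centeredIncrement hψ) (.of_forall (hincr ht₁))
          (.of_forall (hincr ht₂)) (integral_centeredIncrement (hint _) (hint _))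
          (integral_centeredIncrement (hint _) (hint _)) n
    _ = 48 * n ^ 2 * c ^ 4 * ((t - t₁) * (t₂ - t)) := by
        simp only [mul_pow, sq_sqrt (sub_nonneg.2 ht₁), sq_sqrt (sub_nonneg.2 ht₂)]
        ring

theorem centeredIncrement_comp_max_zero {ρ : Measure ℝ} (hρ : ∀ᵐ b ∂ρ, 0 ≤ b) (φ : ℝ → ℝ)
    {s t a : ℝ} (hs : 0 ≤ s) (ht : 0 ≤ t) (ha : 0 ≤ a) :
    centeredIncrement ρ (fun x => φ (max x 0)) s t a =
      (φ (a + t) - ∫ b, φ (b + t) ∂ρ) - (φ (a + s) - ∫ b, φ (b + s) ∂ρ) := by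
  have hmean {u : ℝ} (hu : 0 ≤ u) : ∫ b, φ (max (b + u) 0) ∂ρ = ∫ b, φ (b + u) ∂ρ :=
    integral_congr_ae (hρ.mono fun b hb => by simp only [max_eq_left (add_nonneg hb hu)])
  simp only [centeredIncrement, hmean hs, hmean ht, max_eq_left (add_nonneg ha hs),
    max_eq_left (add_nonneg ha ht)]

/-- **Joint increment moment bound for the CLT-scaled initial age process.**
Let `(τ_j)` be i.i.d. with law `ρ` on `ℝ₊`, `φ ∈ H¹(ℝ₊)`,
`Z_{j,t} = φ(τ_j + t)` and `Z̄_{j,t} = Z_{j,t} - E[Z_{j,t}]`.  There is a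
universal constant `C` such that for all `0 ≤ t₁ < t < t₂` and `n ≤ N`,
`N⁻² E[(∑_{j≤n}(Z̄_{j,t} - Z̄_{j,t₁}))² (∑_{j≤n}(Z̄_{j,t₂} - Z̄_{j,t}))²]
  ≤ C c_φ⁴ (t₂ - t₁)²` with `c_φ² = ∫₀^∞ |φ'|²`. -/
theorem initial_age_fourth_moment_bound :
    ∃ C : ℝ, 0 < C ∧
    ∀ {Ω : Type} [MeasurableSpace Ω] (P : Measure Ω), IsProbabilityMeasure P →
    ∀ (ρ : Measure ℝ) (_ : IsProbabilityMeasure ρ), ρ (Set.Iio 0) = 0 →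
    ∀ (τ : ℕ → Ω → ℝ), (∀ j, Measurable (τ j)) →
      (∀ j, P.map (τ j) = ρ) →
      iIndepFun τ P →
    ∀ (φ φ' : ℝ → ℝ),
      MemLp φ 2 (volume.restrict (Set.Ici (0:ℝ))) →
      MemLp φ' 2 (volume.restrict (Set.Ici (0:ℝ))) →
      (∀ t : ℝ, 0 ≤ t → φ t = φ 0 + ∫ s in (0:ℝ)..t, φ' s) →
    ∀ (N n : ℕ), n ≤ N → 1 ≤ N →
    ∀ t₁ t t₂ : ℝ, 0 ≤ t₁ → t₁ < t → t < t₂ →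
      (1 / (N : ℝ) ^ 2) *
        ∫ ω, (∑ j ∈ Finset.range n,
            ((φ (τ j ω + t) - ∫ a, φ (a + t) ∂ρ)
              - (φ (τ j ω + t₁) - ∫ a, φ (a + t₁) ∂ρ))) ^ 2
          * (∑ j ∈ Finset.range n,
            ((φ (τ j ω + t₂) - ∫ a, φ (a + t₂) ∂ρ)
              - (φ (τ j ω + t) - ∫ a, φ (a + t) ∂ρ))) ^ 2 ∂P
      ≤ C * (∫ r in Set.Ici (0:ℝ), (φ' r) ^ 2) ^ 2 * (t₂ - t₁) ^ 2 := by
  refine ⟨48, by norm_num, ?_⟩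
  intro Ω _ P _ ρ _ hρ₀ τ hτ hlaw hind φ φ' hφ hφ' hrep N n hnN _ t₁ t t₂ ht₁ ht₁t htt₂
  have hρ : ∀ᵐ b ∂ρ, 0 ≤ b := ae_iff.2 <| by simp only [not_le]; exact hρ₀
  have hτ₀ : ∀ᵐ ω ∂P, ∀ j, 0 ≤ τ j ω :=
    ae_all_iff.2 fun j => ae_of_ae_map (hτ j).aemeasurable (p := (0 ≤ ·)) (by rwa [hlaw j])
  have ht : 0 ≤ t := ht₁.trans ht₁t.le
  have ht₂ : 0 ≤ t₂ := ht.trans htt₂.le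
  set K := ∫ r in Ici 0, φ' r ^ 2
  have hold (x y : ℝ) (hx : 0 ≤ x) (hxy : x ≤ y) : |φ y - φ x| ≤ √K * √(y - x) :=
    abs_sub_le_sqrt_integral_sq_mul_sqrt hφ' hrep hx hxy
  -- `φ` is only controlled on `ℝ₊`; `φ (max · 0)` is a bounded, globally Hölder extension that
  -- agrees with `φ` at every age that occurs.
  have key := integral_sq_sum_centeredIncrement_mul_sq_sum_centeredIncrement_le hind hτ hlaw
    (fun x y => abs_comp_max_zero_sub_le (sqrt_nonneg K) hold)
    (fun x => abs_le_add_sqrt_integral_sq_of_abs_sub_le (sqrt_nonneg K) hφ.integrable_sq hold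
      (le_max_right x 0)) ht₁t.le htt₂.le n
  have hK : √K ^ 4 = K ^ 2 := by
    rw [show 4 = 2 * 2 from rfl, pow_mul, sq_sqrt (setIntegral_nonneg measurableSet_Ici
      fun _ _ => sq_nonneg _)]
  have hn : (n : ℝ) ^ 2 / N ^ 2 ≤ 1 := div_le_one_of_le₀ (by gcongr) (by positivity)
  have hprod : (t - t₁) * (t₂ - t) ≤ (t₂ - t₁) ^ 2 := by nlinarith
  calc _ ≤ 1 / (N : ℝ) ^ 2 * (48 * n ^ 2 * √K ^ 4 * ((t - t₁) * (t₂ - t))) := by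
        gcongr
        refine (le_of_eq (integral_congr_ae ?_)).trans key
        filter_upwards [hτ₀] with ω hω
        simp only [centeredIncrement_comp_max_zero hρ φ, hω, ht₁, ht, ht₂]
    _ = 48 * K ^ 2 * ((n ^ 2 / N ^ 2) * ((t - t₁) * (t₂ - t))) := by rw [hK]; ring
    _ ≤ 48 * K ^ 2 * (1 * (t₂ - t₁) ^ 2) := by gcongr
    _ = 48 * K ^ 2 * (t₂ - t₁) ^ 2 := by ring
end

section
/- Uniqueness of the Volterra integral system (FLLN limit): suppose λ̄ : ℝ_+ → [0, λ*] is measurable and bounded, μ̄_0 is a finite measure on ℝ_+, and S̄(0) ∈ (0,1). Then the system S̄(t) = S̄(0) − ∫_0^t Ῡ(s) ds, 𝔉̄(t) = ∫_0^∞ λ̄(a+t) μ̄_0(da) + ∫_0^t λ̄(t−s) Ῡ(s) ds, Ῡ(t) = S̄(t) 𝔉̄(t), admits at most one solution (S̄, 𝔉̄) with S̄ continuous and 𝔉̄ measurable locally bounded with 0 ≤ 𝔉̄(t) ≤ λ*(μ̄_0(ℝ_+) + ∫_0^t Ῡ) and 0 ≤ S̄(t) ≤ 1. -/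
open Set MeasureTheory Filter Topology
open scoped Nat

/-!
Let `Ῡᵢ = S̄ᵢ 𝔉̄ᵢ` and `δ = |Ῡ₁ - Ῡ₂|`. Subtracting the equations, `|S̄₁ - S̄₂|(t) ≤ ∫₀ᵗ δ` and,
since `0 ≤ λ̄ ≤ λ*`, `|𝔉̄₁ - 𝔉̄₂|(t) ≤ λ* ∫₀ᵗ δ`. Writing
`Ῡ₁ - Ῡ₂ = S̄₁ (𝔉̄₁ - 𝔉̄₂) + (S̄₁ - S̄₂) 𝔉̄₂` and bounding `S̄₁` and `𝔉̄₂` on `[0, T]` gives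
`δ(t) ≤ K ∫₀ᵗ δ`, and iterating this inequality gives `δ(t) ≤ B (K t)ⁿ / n! → 0`.
So `δ = 0` on `[0, T]`, and then both differences vanish.
-/

lemma norm_mul_sub_mul_le {R : Type*} [SeminormedRing R] (a b c d : R) :
    ‖a * b - c * d‖ ≤ ‖a‖ * ‖b - d‖ + ‖a - c‖ * ‖d‖ := by
  calc ‖a * b - c * d‖ = ‖a * (b - d) + (a - c) * d‖ := by noncomm_ring
    _ ≤ ‖a‖ * ‖b - d‖ + ‖a - c‖ * ‖d‖ :=
      (norm_add_le _ _).trans (add_le_add (norm_mul_le _ _) (norm_mul_le _ _))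

lemma abs_mul_sub_mul_le_of_le {a b c d A D u v : ℝ} (ha : |a| ≤ A) (hd : |d| ≤ D)
    (hac : |a - c| ≤ u) (hbd : |b - d| ≤ v) : |a * b - c * d| ≤ A * v + u * D :=
  (norm_mul_sub_mul_le a b c d).trans <|
    add_le_add (mul_le_mul ha hbd (abs_nonneg _) ((abs_nonneg _).trans ha))
      (mul_le_mul hac hd (abs_nonneg _) ((abs_nonneg _).trans hac))

lemma integrableOn_Icc_of_abs_le {f : ℝ → ℝ} {a b C : ℝ} (hf : Measurable f)
    (hC : ∀ s ∈ Icc a b, |f s| ≤ C) : IntegrableOn f (Icc a b) :=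
  Measure.integrableOn_of_bounded (M := C) measure_Icc_lt_top.ne hf.aestronglyMeasurable
    (ae_restrict_of_forall_mem measurableSet_Icc hC)

lemma abs_integral_mul_sub_integral_mul_le {k f g : ℝ → ℝ} {x L : ℝ} (hx : 0 ≤ x)
    (hk : AEStronglyMeasurable k) (hkL : ∀ s, |k s| ≤ L)
    (hf : IntegrableOn f (Icc 0 x)) (hg : IntegrableOn g (Icc 0 x)) :
    |(∫ s in 0..x, k s * f s) - ∫ s in 0..x, k s * g s| ≤ L * ∫ s in 0..x, |f s - g s| := by
  have hIcc {u : ℝ → ℝ} : IntegrableOn u (Icc 0 x) → IntervalIntegrable u volume 0 x :=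
    (intervalIntegrable_iff_integrableOn_Icc_of_le hx).2
  have hkf := hIcc (hf.bdd_mul hk.restrict (ae_of_all _ hkL))
  have hkg := hIcc (hg.bdd_mul hk.restrict (ae_of_all _ hkL))
  rw [← intervalIntegral.integral_sub hkf hkg, ← intervalIntegral.integral_const_mul]
  refine (intervalIntegral.abs_integral_le_integral_abs hx).trans <|
    intervalIntegral.integral_mono_on hx (hkf.sub hkg).abs ((hIcc (hf.sub hg)).abs.const_mul L)
      fun s _ => ?_
  rw [← mul_sub, abs_mul]
  exact mul_le_mul_of_nonneg_right (hkL s) (abs_nonneg _)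

lemma le_mul_pow_div_factorial_of_le_mul_integral {h : ℝ → ℝ} {T K B : ℝ} (hK : 0 ≤ K)
    (hint : IntegrableOn h (Icc 0 T)) (hB : ∀ x ∈ Icc 0 T, h x ≤ B)
    (hle : ∀ x ∈ Icc 0 T, h x ≤ K * ∫ s in 0..x, h s) (n : ℕ) :
    ∀ x ∈ Icc 0 T, h x ≤ B * (K * x) ^ n / n ! := by
  induction n with
  | zero => simpa using hB
  | succ n ih =>
    intro x hx
    have hint_x : IntervalIntegrable h volume 0 x :=
      (intervalIntegrable_iff_integrableOn_Icc_of_le hx.1).2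
        (hint.mono_set (Icc_subset_Icc_right hx.2))
    have hmono : ∫ s in 0..x, h s ≤ ∫ s in 0..x, B * K ^ n / n ! * s ^ n :=
      intervalIntegral.integral_mono_on hx.1 hint_x
        ((by fun_prop : Continuous _).intervalIntegrable _ _)
        fun s hs => (ih s ⟨hs.1, hs.2.trans hx.2⟩).trans_eq (by ring)
    calc h x ≤ K * ∫ s in 0..x, h s := hle x hx
      _ ≤ K * ∫ s in 0..x, B * K ^ n / n ! * s ^ n := mul_le_mul_of_nonneg_left hmono hK
      _ = B * (K * x) ^ (n + 1) / (n + 1)! := by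
        rw [intervalIntegral.integral_const_mul, integral_pow, Nat.factorial_succ]
        push_cast
        field_simp
        ring

lemma eqOn_zero_of_le_mul_integral {h : ℝ → ℝ} {T K : ℝ}
    (hint : IntegrableOn h (Icc 0 T)) (hnn : ∀ x ∈ Icc 0 T, 0 ≤ h x)
    (hle : ∀ x ∈ Icc 0 T, h x ≤ K * ∫ s in 0..x, h s) : EqOn h 0 (Icc 0 T) := by
  have hmono {x y : ℝ} (hx : 0 ≤ x) (hxy : x ≤ y) (hy : y ≤ T) :
      ∫ s in 0..x, h s ≤ ∫ s in 0..y, h s :=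
    intervalIntegral.integral_mono_interval le_rfl hx hxy
      (ae_restrict_of_forall_mem measurableSet_Ioc fun s hs =>
        hnn s ⟨hs.1.le, hs.2.trans hy⟩)
      ((intervalIntegrable_iff_integrableOn_Icc_of_le (hx.trans hxy)).2
        (hint.mono_set (Icc_subset_Icc_right hy)))
  set K' := max K 0
  have hle' : ∀ x ∈ Icc 0 T, h x ≤ K' * ∫ s in 0..x, h s := fun x hx =>
    (hle x hx).trans (mul_le_mul_of_nonneg_right (le_max_left K 0)
      (by simpa using hmono le_rfl hx.1 hx.2))
  have hB : ∀ x ∈ Icc 0 T, h x ≤ K' * ∫ s in 0..T, h s := fun x hx =>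
    (hle' x hx).trans (mul_le_mul_of_nonneg_left (hmono hx.1 hx.2 le_rfl) (le_max_right K 0))
  intro x hx
  have hlim : Tendsto (fun n : ℕ => (K' * ∫ s in 0..T, h s) * (K' * x) ^ n / n !) atTop (𝓝 0) := by
    simpa [mul_div_assoc] using
      (FloorSemiring.tendsto_pow_div_factorial_atTop (K' * x)).const_mul (K' * ∫ s in 0..T, h s)
  exact le_antisymm (ge_of_tendsto' hlim fun n =>
    le_mul_pow_div_factorial_of_le_mul_integral (le_max_right K 0) hint hB hle' n x hx) (hnn x hx)

theorem volterra_system_uniqueness_general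
    (lamStar : ℝ)
    (lamBar : ℝ → ℝ) (hlamMeas : Measurable lamBar)
    (hlamBd : ∀ t, 0 ≤ lamBar t ∧ lamBar t ≤ lamStar)
    (μ₀ : Measure ℝ)
    (S0 : ℝ)
    (S₁ S₂ F₁ F₂ : ℝ → ℝ)
    (hS₁cont : Continuous S₁) (hS₂cont : Continuous S₂)
    (hF₁meas : Measurable F₁) (hF₂meas : Measurable F₂)
    (hF₁locbd : ∀ T : ℝ, ∃ M, ∀ t ∈ Set.Icc 0 T, |F₁ t| ≤ M)
    (hF₂locbd : ∀ T : ℝ, ∃ M, ∀ t ∈ Set.Icc 0 T, |F₂ t| ≤ M)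
    (hS₁eq : ∀ t, 0 ≤ t → S₁ t = S0 - ∫ s in (0:ℝ)..t, S₁ s * F₁ s)
    (hS₂eq : ∀ t, 0 ≤ t → S₂ t = S0 - ∫ s in (0:ℝ)..t, S₂ s * F₂ s)
    (hF₁eq : ∀ t, 0 ≤ t → F₁ t =
      (∫ a, lamBar (a + t) ∂μ₀) + ∫ s in (0:ℝ)..t, lamBar (t - s) * (S₁ s * F₁ s))
    (hF₂eq : ∀ t, 0 ≤ t → F₂ t =
      (∫ a, lamBar (a + t) ∂μ₀) + ∫ s in (0:ℝ)..t, lamBar (t - s) * (S₂ s * F₂ s)) :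
    ∀ t, 0 ≤ t → S₁ t = S₂ t ∧ F₁ t = F₂ t := by
  intro T hT
  set Y₁ := fun s => S₁ s * F₁ s
  set Y₂ := fun s => S₂ s * F₂ s
  obtain ⟨M₁, hM₁⟩ := hF₁locbd T
  obtain ⟨M₂, hM₂⟩ := hF₂locbd T
  obtain ⟨C, hC⟩ := isCompact_Icc.exists_bound_of_continuousOn (hS₁cont.continuousOn (s := Icc 0 T))
  have hY₁ : IntegrableOn Y₁ (Icc 0 T) :=
    (integrableOn_Icc_of_abs_le hF₁meas hM₁).continuousOn_mul hS₁cont.continuousOn isCompact_Icc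
  have hY₂ : IntegrableOn Y₂ (Icc 0 T) :=
    (integrableOn_Icc_of_abs_le hF₂meas hM₂).continuousOn_mul hS₂cont.continuousOn isCompact_Icc
  have hsub : ∀ x ∈ Icc 0 T, Icc 0 x ⊆ Icc 0 T := fun x hx => Icc_subset_Icc_right hx.2
  have hS : ∀ x ∈ Icc 0 T, |S₁ x - S₂ x| ≤ ∫ s in 0..x, |Y₁ s - Y₂ s| := by
    intro x hx
    rw [hS₁eq x hx.1, hS₂eq x hx.1, sub_sub_sub_cancel_left]
    simpa [abs_sub_comm] using abs_integral_mul_sub_integral_mul_le (k := 1) (L := 1) hx.1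
      aestronglyMeasurable_const (by simp) (hY₂.mono_set (hsub x hx)) (hY₁.mono_set (hsub x hx))
  have hF : ∀ x ∈ Icc 0 T, |F₁ x - F₂ x| ≤ lamStar * ∫ s in 0..x, |Y₁ s - Y₂ s| := by
    intro x hx
    rw [hF₁eq x hx.1, hF₂eq x hx.1, add_sub_add_left_eq_sub]
    exact abs_integral_mul_sub_integral_mul_le hx.1
      (by fun_prop : Measurable fun s => lamBar (x - s)).aestronglyMeasurable
      (fun s => abs_le.2 ⟨by linarith [hlamBd (x - s)], (hlamBd _).2⟩)
      (hY₁.mono_set (hsub x hx)) (hY₂.mono_set (hsub x hx))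
  have hY : ∀ x ∈ Icc 0 T, |Y₁ x - Y₂ x| ≤ (C * lamStar + M₂) * ∫ s in 0..x, |Y₁ s - Y₂ s| :=
    fun x hx => (abs_mul_sub_mul_le_of_le (hC x hx) (hM₂ x hx) (hS x hx) (hF x hx)).trans_eq
      (by ring)
  have hzero := eqOn_zero_of_le_mul_integral (h := fun s => |Y₁ s - Y₂ s|)
    (hY₁.sub hY₂).abs (fun _ _ => abs_nonneg _) hY
  have hI : ∫ s in 0..T, |Y₁ s - Y₂ s| = 0 := by
    simp [intervalIntegral.integral_congr (hzero.mono (uIcc_of_le hT).le)]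
  have hT' : T ∈ Icc 0 T := ⟨hT, le_rfl⟩
  exact ⟨by simpa [hI, sub_eq_zero] using hS T hT', by simpa [hI, sub_eq_zero] using hF T hT'⟩

/-- **Uniqueness of the FLLN Volterra integral system.**
With `λ̄ : ℝ₊ → [0, λ*]` measurable bounded, `μ̄₀` a finite measure on `ℝ₊`, and
`S̄(0) ∈ (0,1)`, the system
`S̄(t) = S̄(0) - ∫₀ᵗ Ῡ(s) ds`,
`𝔉̄(t) = ∫₀^∞ λ̄(a+t) μ̄₀(da) + ∫₀ᵗ λ̄(t-s) Ῡ(s) ds`, `Ῡ = S̄ 𝔉̄`,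
admits at most one solution with `S̄` continuous, `0 ≤ S̄ ≤ 1`, and `𝔉̄`
measurable locally bounded with `0 ≤ 𝔉̄(t) ≤ λ*(μ̄₀(ℝ₊) + ∫₀ᵗ Ῡ)`. -/
theorem volterra_system_uniqueness
    (lamStar : ℝ) (hlamStar : 0 ≤ lamStar)
    (lamBar : ℝ → ℝ) (hlamMeas : Measurable lamBar)
    (hlamBd : ∀ t, 0 ≤ lamBar t ∧ lamBar t ≤ lamStar)
    (μ₀ : Measure ℝ) [IsFiniteMeasure μ₀] (hμ₀supp : μ₀ (Set.Iio 0) = 0)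
    (S0 : ℝ) (hS0 : S0 ∈ Set.Ioo (0:ℝ) 1)
    (S₁ S₂ F₁ F₂ : ℝ → ℝ)
    (hS₁cont : Continuous S₁) (hS₂cont : Continuous S₂)
    (hS₁bd : ∀ t, 0 ≤ t → 0 ≤ S₁ t ∧ S₁ t ≤ 1)
    (hS₂bd : ∀ t, 0 ≤ t → 0 ≤ S₂ t ∧ S₂ t ≤ 1)
    (hF₁meas : Measurable F₁) (hF₂meas : Measurable F₂)
    (hF₁locbd : ∀ T : ℝ, ∃ M, ∀ t ∈ Set.Icc 0 T, |F₁ t| ≤ M)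
    (hF₂locbd : ∀ T : ℝ, ∃ M, ∀ t ∈ Set.Icc 0 T, |F₂ t| ≤ M)
    (hF₁bd : ∀ t, 0 ≤ t → 0 ≤ F₁ t ∧
      F₁ t ≤ lamStar * ((μ₀ Set.univ).toReal + ∫ s in (0:ℝ)..t, S₁ s * F₁ s))
    (hF₂bd : ∀ t, 0 ≤ t → 0 ≤ F₂ t ∧
      F₂ t ≤ lamStar * ((μ₀ Set.univ).toReal + ∫ s in (0:ℝ)..t, S₂ s * F₂ s))
    (hS₁eq : ∀ t, 0 ≤ t → S₁ t = S0 - ∫ s in (0:ℝ)..t, S₁ s * F₁ s)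
    (hS₂eq : ∀ t, 0 ≤ t → S₂ t = S0 - ∫ s in (0:ℝ)..t, S₂ s * F₂ s)
    (hF₁eq : ∀ t, 0 ≤ t → F₁ t =
      (∫ a, lamBar (a + t) ∂μ₀) + ∫ s in (0:ℝ)..t, lamBar (t - s) * (S₁ s * F₁ s))
    (hF₂eq : ∀ t, 0 ≤ t → F₂ t =
      (∫ a, lamBar (a + t) ∂μ₀) + ∫ s in (0:ℝ)..t, lamBar (t - s) * (S₂ s * F₂ s)) :
    ∀ t, 0 ≤ t → S₁ t = S₂ t ∧ F₁ t = F₂ t :=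
  volterra_system_uniqueness_general lamStar lamBar hlamMeas hlamBd μ₀ S0 S₁ S₂ F₁ F₂ hS₁cont
    hS₂cont hF₁meas hF₂meas hF₁locbd hF₂locbd hS₁eq hS₂eq hF₁eq hF₂eq
end
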